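/- Let C and D be ∞-categories and n ≥ 1. Then: (a) the natural map h_n(C × D) → h_nC × h_nD is an isomorphism of simplicial sets; (b) there is a functor h_n^{C,D} : Fun(C, D) → Fun(h_nC, h_nD), sending a k-simplex F : C × Δ^k → D to the composite h_nC × Δ^k ≅ h_nC × h_n(Δ^k) ≅ h_n(C × Δ^k) → h_nD, which is natural in C and D; in particular h_n : Cat_∞ → Cat_n is an enriched functor. -/

import Mathlib

open CategoryTheory Simplicial Opposite

namespace HighCat


/-- Pointwise binary product of simplicial sets. -/
def sprod (K L : SSet.{0}) : SSet.{0} where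
  obj m := K.obj m × L.obj m
  map f := TypeCat.ofHom fun x => (K.map f x.1, L.map f x.2)
  map_id m := ConcreteCategory.hom_ext _ _ fun x => by simp
  map_comp f g := ConcreteCategory.hom_ext _ _ fun x => by simp

def sprodFst {K L : SSet} : sprod K L ⟶ K where
  app m := TypeCat.ofHom fun x => x.1
  naturality _ _ _ := rfl

def sprodSnd {K L : SSet} : sprod K L ⟶ L where
  app m := TypeCat.ofHom fun x => x.2
  naturality _ _ _ := rfl

def sprodLift {A K L : SSet} (f : A ⟶ K) (g : A ⟶ L) : A ⟶ sprod K L where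
  app m := TypeCat.ofHom fun a => (f.app m a, g.app m a)
  naturality m m' α := by
    refine ConcreteCategory.hom_ext _ _ fun a => ?_
    dsimp [sprod]
    rw [Prod.ext_iff]
    exact ⟨types_congr_hom (f.naturality α) a, types_congr_hom (g.naturality α) a⟩

def sprodMap {K K' L L' : SSet} (f : K ⟶ K') (g : L ⟶ L') : sprod K L ⟶ sprod K' L' :=
  sprodLift (sprodFst ≫ f) (sprodSnd ≫ g)

/-- Pointwise binary coproduct of simplicial sets. -/
def ssum (K L : SSet.{0}) : SSet.{0} where
  obj m := K.obj m ⊕ L.obj m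
  map f := TypeCat.ofHom fun x => x.elim (fun a => .inl (K.map f a)) (fun b => .inr (L.map f b))
  map_id m := ConcreteCategory.hom_ext _ _ fun x => by cases x <;> simp
  map_comp f g := ConcreteCategory.hom_ext _ _ fun x => by cases x <;> simp

def ssumInl {K L : SSet} : K ⟶ ssum K L where
  app m := TypeCat.ofHom fun a => .inl a
  naturality _ _ _ := rfl

def ssumInr {K L : SSet} : L ⟶ ssum K L where
  app m := TypeCat.ofHom fun a => .inr a
  naturality _ _ _ := rfl

/-- The empty simplicial set. -/
def sempty : SSet.{0} where
  obj _ := PEmpty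
  map _ := TypeCat.ofHom fun x => x.elim

/-- Our explicit model of the standard `n`-simplex (isomorphic to `Δ[n]`),
with strictly associative functorial structure. -/
def stdS (n : ℕ) : SSet.{0} where
  obj m := Fin (m.unop.len + 1) →o Fin (n + 1)
  map f := TypeCat.ofHom fun u => u.comp f.unop.toOrderHom
  map_id _ := rfl
  map_comp _ _ := rfl

/-- Cosimplicial functoriality of `stdS`. -/
def stdSMap {p q : SimplexCategory} (f : p ⟶ q) :
    stdS p.len ⟶ stdS q.len where
  app m := TypeCat.ofHom fun u => f.toOrderHom.comp u
  naturality _ _ _ := rfl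

/-- The tautological top-dimensional simplex of `stdS n`. -/
def stdTaut (n : ℕ) : (stdS n).obj (op (SimplexCategory.mk n)) := OrderHom.id

/-- The simplicial map classifying a simplex, for our `stdS` model (Yoneda). -/
def simplexMap {A : SSet.{0}} {m : SimplexCategoryᵒᵖ} (a : A.obj m) :
    stdS m.unop.len ⟶ A where
  app q := TypeCat.ofHom fun u => A.map (Quiver.Hom.op (SimplexCategory.Hom.mk u : q.unop ⟶ m.unop)) a
  naturality q q' β := by
    refine ConcreteCategory.hom_ext _ _ fun u => ?_
    exact FunctorToTypes.map_comp_apply A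
      (Quiver.Hom.op (SimplexCategory.Hom.mk u : q.unop ⟶ m.unop)) β a

@[simp] lemma simplexMap_taut {A : SSet.{0}} {m : SimplexCategoryᵒᵖ} (a : A.obj m) :
    (simplexMap a).app _ (stdTaut m.unop.len) = a :=
  types_congr_hom (A.map_id m) a

-- ### Skeleta

/-- `x` lies in the `d`-skeleton of `K`. -/
def inSk (d : ℕ) (K : SSet.{0}) {m : SimplexCategoryᵒᵖ} (x : K.obj m) : Prop :=
  ∃ (k : ℕ) (_ : k ≤ d) (φ : m.unop ⟶ SimplexCategory.mk k)
    (y : K.obj (op (SimplexCategory.mk k))), x = K.map φ.op y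

lemma inSk_map {d : ℕ} {K : SSet.{0}} {m m' : SimplexCategoryᵒᵖ} {x : K.obj m}
    (h : inSk d K x) (f : m ⟶ m') : inSk d K (K.map f x) := by
  obtain ⟨k, hk, φ, y, rfl⟩ := h
  exact ⟨k, hk, f.unop ≫ φ, y, (FunctorToTypes.map_comp_apply K φ.op f y).symm⟩

lemma inSk_mono {d d' : ℕ} (h : d ≤ d') {K : SSet.{0}} {m : SimplexCategoryᵒᵖ} {x : K.obj m}
    (hx : inSk d K x) : inSk d' K x := by
  obtain ⟨k, hk, φ, y, rfl⟩ := hx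
  exact ⟨k, hk.trans h, φ, y, rfl⟩

lemma inSk_natApp {d : ℕ} {K L : SSet.{0}} (f : K ⟶ L) {m : SimplexCategoryᵒᵖ} {x : K.obj m}
    (h : inSk d K x) : inSk d L (f.app m x) := by
  obtain ⟨k, hk, φ, y, rfl⟩ := h
  exact ⟨k, hk, φ, f.app _ y, types_congr_hom (f.naturality φ.op) y⟩

/-- The `d`-skeleton of a simplicial set. -/
def sk (d : ℕ) (K : SSet.{0}) : SSet.{0} where
  obj m := {x : K.obj m // inSk d K x}
  map f := TypeCat.ofHom fun x => ⟨K.map f x.1, inSk_map x.2 f⟩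
  map_id m := ConcreteCategory.hom_ext _ _ fun x => Subtype.ext (types_congr_hom (K.map_id m) x.1)
  map_comp f g := ConcreteCategory.hom_ext _ _ fun x => Subtype.ext (types_congr_hom (K.map_comp f g) x.1)

def skIncl (d : ℕ) (K : SSet.{0}) : sk d K ⟶ K where
  app m := TypeCat.ofHom fun x => x.1
  naturality _ _ _ := rfl

def skSkIncl {d d' : ℕ} (h : d ≤ d') (K : SSet.{0}) : sk d K ⟶ sk d' K where
  app m := TypeCat.ofHom fun x => ⟨x.1, inSk_mono h x.2⟩
  naturality _ _ _ := rfl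

def skMap (d : ℕ) {K L : SSet.{0}} (f : K ⟶ L) : sk d K ⟶ sk d L where
  app m := TypeCat.ofHom fun x => ⟨f.app m x.1, inSk_natApp f x.2⟩
  naturality m m' α := by
    refine ConcreteCategory.hom_ext _ _ fun x => ?_
    exact Subtype.ext (types_congr_hom (f.naturality α) x.1)

-- ### The interval J

/-- The chaotic (indiscrete) groupoid on two objects. -/
inductive Walking : Type where
  | W0
  | W1 : Walking

instance : Category Walking where
  Hom _ _ := PUnit
  id _ := ⟨⟩
  comp _ _ := ⟨⟩

/-- The interval `J`: the nerve of the chaotic groupoid on two objects.  A homotopy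
through equivalences is a homotopy with parameter interval `J`. -/
def Jint : SSet.{0} := nerve Walking

/-- Insert `K` at level `b` of the cylinder `K × J`. -/
def insJ (K : SSet.{0}) (b : Walking) : K ⟶ sprod K Jint where
  app m := TypeCat.ofHom fun x => (x, (Functor.const _).obj b)
  naturality _ _ _ := rfl

/-- `f` and `g` are homotopic relative to `i : L ⟶ K` through equivalences
(i.e. there is a `J`-homotopy from `f` to `g` whose restriction to `L` is constant). -/
def HomotopicRelJ {L K C : SSet.{0}} (i : L ⟶ K) (f g : K ⟶ C) : Prop :=
  ∃ H : sprod K Jint ⟶ C,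
    insJ K Walking.W0 ≫ H = f ∧ insJ K Walking.W1 ≫ H = g ∧
      sprodMap i (𝟙 Jint) ≫ H = sprodFst ≫ i ≫ f

/-- Plain `J`-homotopy of maps (natural equivalence). -/
def JHomotopic {K C : SSet.{0}} (f g : K ⟶ C) : Prop :=
  ∃ H : sprod K Jint ⟶ C, insJ K Walking.W0 ≫ H = f ∧ insJ K Walking.W1 ≫ H = g

-- ### The homotopy n-category

variable (n : ℕ) (C : SSet.{0})

/-- The simplices used to build the homotopy `n`-category: maps defined on the `n`-skeleton
of the standard simplex which extend to the `(n+1)`-skeleton. -/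
def NSimp (m : SimplexCategoryᵒᵖ) : Type :=
  {u : sk n (stdS m.unop.len) ⟶ C //
    ∃ v : sk (n + 1) (stdS m.unop.len) ⟶ C, skSkIncl (Nat.le_succ n) _ ≫ v = u}

/-- The defining relation: homotopy relative to the `(n-1)`-skeleton, through equivalences. -/
def NRel {m : SimplexCategoryᵒᵖ} (u u' : NSimp n C m) : Prop :=
  HomotopicRelJ (skSkIncl (Nat.sub_le n 1) (stdS m.unop.len)) u.1 u'.1

/-- Pullback of an `NSimp` along a simplicial operator. -/
def NSimp.pull {m m' : SimplexCategoryᵒᵖ} (f : m ⟶ m') (u : NSimp n C m) : NSimp n C m' :=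
  ⟨skMap n (stdSMap f.unop) ≫ u.1,
   by
    obtain ⟨v, hv⟩ := u.2
    exact ⟨skMap (n+1) (stdSMap f.unop) ≫ v,
      by rw [← hv]; rfl⟩⟩

lemma NRel.pull {m m' : SimplexCategoryᵒᵖ} (f : m ⟶ m') {u u' : NSimp n C m}
    (h : NRel n C u u') : NRel n C (u.pull n C f) (u'.pull n C f) := by
  obtain ⟨H, h0, h1, hrel⟩ := h
  refine ⟨sprodMap (skMap n (stdSMap f.unop)) (𝟙 Jint) ≫ H, ?_, ?_, ?_⟩
  · show insJ _ Walking.W0 ≫ sprodMap (skMap n (stdSMap f.unop)) (𝟙 Jint) ≫ H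
        = skMap n (stdSMap f.unop) ≫ u.1
    rw [← h0]; rfl
  · show insJ _ Walking.W1 ≫ sprodMap (skMap n (stdSMap f.unop)) (𝟙 Jint) ≫ H
        = skMap n (stdSMap f.unop) ≫ u'.1
    rw [← h1]; rfl
  · show _ = _
    have : sprodMap (skSkIncl (Nat.sub_le n 1) (stdS m'.unop.len)) (𝟙 Jint) ≫
        sprodMap (skMap n (stdSMap f.unop)) (𝟙 Jint) ≫ H
        = sprodMap (skMap (n-1) (stdSMap f.unop)) (𝟙 Jint) ≫
          sprodMap (skSkIncl (Nat.sub_le n 1) (stdS m.unop.len)) (𝟙 Jint) ≫ H := rfl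
    rw [this, hrel]
    rfl

/-- The homotopy `n`-category of a simplicial set (Lurie, HTT 2.3.4; the paper, §2). -/
def hq : SSet.{0} where
  obj m := Quot (NRel n C (m := m))
  map f := TypeCat.ofHom (Quot.lift (fun u => Quot.mk _ (u.pull n C f))
    (fun _ _ h => Quot.sound (h.pull n C f)))
  map_id m := by
    refine ConcreteCategory.hom_ext _ _ fun x => ?_
    induction x using Quot.ind with
    | _ u => exact congrArg (Quot.mk _) (Subtype.ext rfl)
  map_comp f g := by
    refine ConcreteCategory.hom_ext _ _ fun x => ?_
    induction x using Quot.ind with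
    | _ u => exact congrArg (Quot.mk _) (Subtype.ext rfl)

/-- The canonical functor `γₙ : C ⟶ hₙ C`. -/
def toHq : C ⟶ hq n C where
  app m := TypeCat.ofHom fun x => Quot.mk _
    ⟨skIncl n _ ≫ simplexMap x, skIncl (n+1) _ ≫ simplexMap x, rfl⟩
  naturality m m' f := by
    refine ConcreteCategory.hom_ext _ _ fun x => ?_
    refine congrArg (Quot.mk _) (Subtype.ext ?_)
    show skIncl n _ ≫ simplexMap (C.map f x)
        = skMap n (stdSMap f.unop) ≫ skIncl n _ ≫ simplexMap x
    refine NatTrans.ext (funext fun q => ConcreteCategory.hom_ext _ _ fun u => ?_)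
    exact (FunctorToTypes.map_comp_apply C f
      (Quiver.Hom.op (SimplexCategory.Hom.mk u.1 : q.unop ⟶ m'.unop)) x).symm

/-- Functoriality of the homotopy `n`-category in simplicial maps. -/
def hqMap {C D : SSet.{0}} (f : C ⟶ D) : hq n C ⟶ hq n D where
  app m := TypeCat.ofHom <| Quot.map (fun u => ⟨u.1 ≫ f, u.2.elim fun v hv => ⟨v ≫ f, by rw [← hv]; rfl⟩⟩)
    (fun u u' h => by
      obtain ⟨H, h0, h1, hrel⟩ := h
      refine ⟨H ≫ f, ?_, ?_, ?_⟩
      · show insJ _ Walking.W0 ≫ H ≫ f = u.1 ≫ f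
        rw [← h0]; rfl
      · show insJ _ Walking.W1 ≫ H ≫ f = u'.1 ≫ f
        rw [← h1]; rfl
      · show sprodMap _ (𝟙 Jint) ≫ H ≫ f = _
        rw [← Category.assoc, hrel]; rfl)
  naturality m m' α := by
    refine ConcreteCategory.hom_ext _ _ fun x => ?_
    induction x using Quot.ind with
    | _ u => exact congrArg (Quot.mk _) (Subtype.ext rfl)

-- ### Vertices, edges, constant maps

abbrev Vert (A : SSet.{0}) : Type := A.obj (op (SimplexCategory.mk 0))
abbrev EdgeS (A : SSet.{0}) : Type := A.obj (op (SimplexCategory.mk 1))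

def edgeSrc {A : SSet.{0}} (e : EdgeS A) : Vert A := A.map (SimplexCategory.δ 1).op e
def edgeTgt {A : SSet.{0}} (e : EdgeS A) : Vert A := A.map (SimplexCategory.δ 0).op e
def degEdge {A : SSet.{0}} (x : Vert A) : EdgeS A := A.map (SimplexCategory.σ 0).op x

/-- The constant simplicial map at a vertex. -/
def constMap {A : SSet.{0}} (K : SSet.{0}) (x : Vert A) : K ⟶ A where
  app m := TypeCat.ofHom fun _ => A.map (Quiver.Hom.op
    (SimplexCategory.Hom.mk (OrderHom.const _ 0) : m.unop ⟶ SimplexCategory.mk 0)) x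
  naturality m m' f := by
    refine ConcreteCategory.hom_ext _ _ fun k => ?_
    exact FunctorToTypes.map_comp_apply A
      (Quiver.Hom.op (SimplexCategory.Hom.mk (OrderHom.const _ 0) : m.unop ⟶ SimplexCategory.mk 0))
      f x

-- ### Mapping spaces

def endIns (p : ℕ) (e : Fin 2) : stdS p ⟶ sprod (stdS p) (stdS 1) :=
  sprodLift (𝟙 _) { app := fun m => TypeCat.ofHom fun _ => OrderHom.const _ e, naturality := fun _ _ _ => rfl }

/-- The mapping space `Map_C(x, y)` (the "arrow space" model):  its `m`-simplices are maps
`Δ^m × Δ^1 ⟶ C` which are constant at `x` resp. `y` on the two ends of the cylinder. -/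
def MapSp (C : SSet.{0}) (x y : Vert C) : SSet.{0} where
  obj m := {u : sprod (stdS m.unop.len) (stdS 1) ⟶ C //
    endIns _ 0 ≫ u = constMap _ x ∧ endIns _ 1 ≫ u = constMap _ y}
  map {m m'} f := TypeCat.ofHom fun u => by
    refine ⟨sprodMap (stdSMap f.unop) (𝟙 (stdS 1)) ≫ u.1, ?_, ?_⟩
    · rw [show endIns _ 0 ≫ sprodMap (stdSMap f.unop) (𝟙 (stdS 1)) ≫ u.1
          = stdSMap f.unop ≫ (endIns _ 0 ≫ u.1) from rfl, u.2.1]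
      rfl
    · rw [show endIns _ 1 ≫ sprodMap (stdSMap f.unop) (𝟙 (stdS 1)) ≫ u.1
          = stdSMap f.unop ≫ (endIns _ 1 ≫ u.1) from rfl, u.2.2]
      rfl
  map_id m := ConcreteCategory.hom_ext _ _ fun u => Subtype.ext rfl
  map_comp f g := ConcreteCategory.hom_ext _ _ fun u => Subtype.ext rfl

/-- Functoriality of mapping spaces in simplicial maps. -/
def mapSpMap {C D : SSet.{0}} (f : C ⟶ D) {x y : Vert C} {x' y' : Vert D}
    (hx : f.app _ x = x') (hy : f.app _ y = y') : MapSp C x y ⟶ MapSp D x' y' where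
  app m := TypeCat.ofHom fun u => by
    refine ⟨u.1 ≫ f, ?_, ?_⟩
    · rw [← Category.assoc, u.2.1]
      subst hx
      exact NatTrans.ext (funext fun q => ConcreteCategory.hom_ext _ _ fun k => types_congr_hom (f.naturality _) x)
    · rw [← Category.assoc, u.2.2]
      subst hy
      exact NatTrans.ext (funext fun q => ConcreteCategory.hom_ext _ _ fun k => types_congr_hom (f.naturality _) y)
  naturality m m' α := ConcreteCategory.hom_ext _ _ fun u => Subtype.ext rfl

-- ### Topological realization, homotopy groups, connectivity

noncomputable def geom : SSet.{0} ⥤ TopCat := SSet.toTop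

/-- the canonical point of the topological 0-simplex -/
def pt0 : SimplexCategory.toTop.{0}.obj (SimplexCategory.mk 0) :=
  ⟨⟨fun _ => 1, by simp [stdSimplex]⟩⟩

/-- The map `yoneda.obj [0] ⟶ A` classifying a vertex. -/
def yMap {A : SSet.{0}} (x : Vert A) : SSet.stdSimplex.obj (SimplexCategory.mk 0) ⟶ A where
  app m := TypeCat.ofHom fun g => A.map (Quiver.Hom.op g.down) x
  naturality m m' f := by
    refine ConcreteCategory.hom_ext _ _ fun g => ?_
    exact FunctorToTypes.map_comp_apply A (Quiver.Hom.op g.down) f x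

/-- The point of the geometric realization determined by a vertex. -/
noncomputable def basePt {A : SSet.{0}} (x : Vert A) : geom.obj A :=
  geom.map (yMap x) ((SSet.toTopSimplex.inv.app (SimplexCategory.mk 0)) pt0)

lemma yMap_comp {A B : SSet.{0}} (f : A ⟶ B) (x : Vert A) :
    yMap (f.app _ x) = yMap x ≫ f :=
  NatTrans.ext (funext fun m => ConcreteCategory.hom_ext _ _ fun g => (types_congr_hom (f.naturality (Quiver.Hom.op g.down)) x).symm)

lemma basePt_nat {A B : SSet.{0}} (f : A ⟶ B) (x : Vert A) :
    geom.map f (basePt x) = basePt (f.app _ x) := by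
  unfold basePt
  rw [yMap_comp, geom.map_comp]
  rfl

/-- The induced map on topological homotopy groups. -/
def πMap (k : ℕ) {X Y : TopCat} (f : X ⟶ Y) (x : X) :
    HomotopyGroup (Fin k) X x → HomotopyGroup (Fin k) Y (f x) :=
  Quotient.map
    (fun p => ⟨f.hom.comp p.1, fun z hz => by
      have := p.2 z hz
      simp only [ContinuousMap.comp_apply]
      rw [this]⟩)
    (fun p q h => h.map fun H => H.compContinuousMap f.hom)

/-- `f` is a `c`-connected map: it induces isomorphisms on `π_k` for `k < c` and a
surjection on `π_c`, at every basepoint. -/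
def TopConn (c : ℕ∞) {X Y : TopCat} (f : X ⟶ Y) : Prop :=
  ∀ x : X,
    (∀ k : ℕ, (k : ℕ∞) < c → Function.Bijective (πMap k f x)) ∧
    (∀ k : ℕ, (k : ℕ∞) = c → Function.Surjective (πMap k f x))

/-- `f` is a weak homotopy equivalence. -/
def IsWeakHomotopyEquiv {X Y : TopCat} (f : X ⟶ Y) : Prop :=
  Function.Bijective (Quotient.map f (fun a b (h : Joined a b) => h.map f.hom.continuous) :
    ZerothHomotopy X → ZerothHomotopy Y) ∧
  ∀ (x : X) (k : ℕ), Function.Bijective (πMap k f x)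

/-- Connectivity of a map of simplicial sets, measured on geometric realizations. -/
def SConnMap (c : ℕ∞) {A B : SSet.{0}} (f : A ⟶ B) : Prop := TopConn c (geom.map f)

/-- `SConn t A` expresses that `A` is `(t-1)`-connected: it is nonempty and the homotopy
groups of its realization vanish in degrees `k < t` (at every basepoint).
E.g. `SConn 0 A` means nonempty and `SConn ⊤ A` means (weakly) contractible. -/
def SConn (t : ℕ∞) (A : SSet.{0}) : Prop :=
  Nonempty (Vert A) ∧
    ∀ (k : ℕ) (p : geom.obj A), (k : ℕ∞) < t → Subsingleton (HomotopyGroup (Fin k) (geom.obj A) p)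

-- ### full subcomplexes of standard simplices, joins

/-- The full subcomplex of `Δ^p` spanned by the vertices satisfying `P`. -/
def vertSub {p : ℕ} (P : Fin (p + 1) → Prop) : SSet.{0} where
  obj m := {u : Fin (m.unop.len + 1) →o Fin (p + 1) // ∀ i, P (u i)}
  map f := TypeCat.ofHom fun u => ⟨u.1.comp f.unop.toOrderHom, fun i => u.2 _⟩
  map_id _ := rfl
  map_comp _ _ := rfl

def vertSubToStd {p : ℕ} {P : Fin (p + 1) → Prop} : vertSub P ⟶ stdS p where
  app m := TypeCat.ofHom fun u => u.1
  naturality _ _ _ := rfl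

/-- restriction of a full subcomplex along a simplex operator -/
def vertSubRestrict {p q : SimplexCategory} (f : p ⟶ q) (P : Fin (q.len + 1) → Prop) :
    vertSub (fun i => P (f.toOrderHom i)) ⟶ vertSub P where
  app m := TypeCat.ofHom fun u => ⟨f.toOrderHom.comp u.1, fun i => u.2 i⟩
  naturality _ _ _ := rfl

/-- A map out of a vertex-empty full subcomplex. -/
def vertSubElim {p : ℕ} {P : Fin (p + 1) → Prop} (h : ∀ i, ¬ P i) (L : SSet.{0}) :
    vertSub P ⟶ L where
  app m := TypeCat.ofHom fun u => (h _ (u.2 0)).elim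
  naturality m m' f := ConcreteCategory.hom_ext _ _ fun u => (h _ (u.2 0)).elim

lemma vertSub_hom_subsingleton {p : ℕ} {P : Fin (p + 1) → Prop} (h : ∀ i, ¬ P i)
    {L : SSet.{0}} (f g : vertSub P ⟶ L) : f = g :=
  NatTrans.ext (funext fun m => ConcreteCategory.hom_ext _ _ fun u => (h _ (u.2 0)).elim)

/-- A cell of the join `K ⋆ L`: a monotone "colouring" of the vertices together with
compatible simplices of `K` and `L` on the two parts. -/
structure JoinCell (K L : SSet.{0}) (m : SimplexCategoryᵒᵖ) where
  c : Fin (m.unop.len + 1) →o Fin 2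
  left : vertSub (fun i => c i = 0) ⟶ K
  right : vertSub (fun i => c i = 1) ⟶ L

lemma JoinCell.mk_eq {K L : SSet.{0}} {m : SimplexCategoryᵒᵖ} {c : Fin (m.unop.len + 1) →o Fin 2}
    {l l' : vertSub (fun i => c i = 0) ⟶ K} {r r' : vertSub (fun i => c i = 1) ⟶ L}
    (hl : l = l') (hr : r = r') : JoinCell.mk c l r = JoinCell.mk c l' r' := by
  rw [hl, hr]

/-- The join of two simplicial sets. -/
def join (K L : SSet.{0}) : SSet.{0} where
  obj m := JoinCell K L m
  map {m m'} f := TypeCat.ofHom fun x =>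
    { c := x.c.comp f.unop.toOrderHom
      left := vertSubRestrict f.unop (fun i => x.c i = 0) ≫ x.left
      right := vertSubRestrict f.unop (fun i => x.c i = 1) ≫ x.right }
  map_id _ := rfl
  map_comp _ _ := rfl

def joinInclLeft {K L : SSet.{0}} : K ⟶ join K L where
  app m := TypeCat.ofHom fun x =>
    { c := OrderHom.const _ 0
      left := vertSubToStd ≫ simplexMap x
      right := vertSubElim (fun i h => Fin.zero_ne_one h) L }
  naturality m m' f := by
    refine ConcreteCategory.hom_ext _ _ fun x => ?_
    refine JoinCell.mk_eq ?_ (vertSub_hom_subsingleton (fun i h => Fin.zero_ne_one h) _ _)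
    refine NatTrans.ext (funext fun q => ConcreteCategory.hom_ext _ _ fun u => ?_)
    exact (FunctorToTypes.map_comp_apply K f
      (Quiver.Hom.op (SimplexCategory.Hom.mk u.1 : q.unop ⟶ m'.unop)) x).symm

def joinInclRight {K L : SSet.{0}} : L ⟶ join K L where
  app m := TypeCat.ofHom fun x =>
    { c := OrderHom.const _ 1
      left := vertSubElim (fun i h => Fin.zero_ne_one h.symm) K
      right := vertSubToStd ≫ simplexMap x }
  naturality m m' f := by
    refine ConcreteCategory.hom_ext _ _ fun x => ?_
    refine JoinCell.mk_eq (vertSub_hom_subsingleton (fun i h => Fin.zero_ne_one h.symm) _ _) ?_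
    refine NatTrans.ext (funext fun q => ConcreteCategory.hom_ext _ _ fun u => ?_)
    exact (FunctorToTypes.map_comp_apply L f
      (Quiver.Hom.op (SimplexCategory.Hom.mk u.1 : q.unop ⟶ m'.unop)) x).symm

def joinMap {K K' L L' : SSet.{0}} (f : K ⟶ K') (g : L ⟶ L') : join K L ⟶ join K' L' where
  app m := TypeCat.ofHom fun x => { c := x.c, left := x.left ≫ f, right := x.right ≫ g }
  naturality _ _ _ := rfl

lemma joinInclLeft_joinMap {K L L' : SSet.{0}} (g : L ⟶ L') :
    (joinInclLeft : K ⟶ join K L) ≫ joinMap (𝟙 K) g = joinInclLeft :=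
  NatTrans.ext (funext fun m => ConcreteCategory.hom_ext _ _ fun x =>
    JoinCell.mk_eq rfl (vertSub_hom_subsingleton (fun i h => Fin.zero_ne_one h) _ _))

-- ### cones and slices under a diagram

/-- The right cone `K ⋆ Δ⁰` on `K`. -/
def rcone (K : SSet.{0}) : SSet.{0} := join K (stdS 0)

/-- The slice (undercategory) `C_{F/}` of a diagram `F : K ⟶ C`:
its `m`-simplices are the maps `K ⋆ Δ^m ⟶ C` extending `F`. -/
def UnderSlice {K C : SSet.{0}} (F : K ⟶ C) : SSet.{0} where
  obj m := {u : join K (stdS m.unop.len) ⟶ C // joinInclLeft ≫ u = F}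
  map {m m'} f := TypeCat.ofHom fun u => ⟨joinMap (𝟙 K) (stdSMap f.unop) ≫ u.1, by
    rw [← Category.assoc, joinInclLeft_joinMap, u.2]⟩
  map_id _ := ConcreteCategory.hom_ext _ _ fun u => Subtype.ext rfl
  map_comp _ _ := ConcreteCategory.hom_ext _ _ fun u => Subtype.ext rfl

/-- A cocone on `F` (a vertex of the slice under `F`): a map `K ⋆ Δ⁰ ⟶ C` extending `F`. -/
abbrev Cocone {K C : SSet.{0}} (F : K ⟶ C) : Type :=
  {u : rcone K ⟶ C // joinInclLeft ≫ u = F}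






-- ### weakly initial objects and weak colimits

/-- `x` is weakly initial of order `t`: all mapping spaces out of `x` are `(t-1)`-connected. -/
def WeaklyInitialOfOrder (t : ℕ∞) (A : SSet.{0}) (x : Vert A) : Prop :=
  ∀ y : Vert A, SConn t (MapSp A x y)

/-- `x` is initial: all mapping spaces out of `x` are contractible. -/
def IsInitialVert (A : SSet.{0}) (x : Vert A) : Prop := WeaklyInitialOfOrder ⊤ A x

/-- `x` is terminal: all mapping spaces into `x` are contractible. -/
def IsTerminalVert (A : SSet.{0}) (x : Vert A) : Prop := ∀ y : Vert A, SConn ⊤ (MapSp A y x)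

/-- zero object: both initial and terminal. -/
def IsZeroVert (A : SSet.{0}) (x : Vert A) : Prop := IsInitialVert A x ∧ IsTerminalVert A x

/-- `G` is a weak colimit of `F` of order `t`:
a weakly initial object of order `t` of the slice `C_{F/}`. -/
def IsWeakColimOfOrder (t : ℕ∞) {K C : SSet.{0}} (F : K ⟶ C) (G : Cocone F) : Prop :=
  WeaklyInitialOfOrder t (UnderSlice F) G

/-- colimit cocone = weak colimit of order `∞`. -/
def IsColimitCocone {K C : SSet.{0}} (F : K ⟶ C) (G : Cocone F) : Prop :=
  IsWeakColimOfOrder ⊤ F G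

def HasWeakColimitsOfOrder (t : ℕ∞) (K C : SSet.{0}) : Prop :=
  ∀ F : K ⟶ C, ∃ G : Cocone F, IsWeakColimOfOrder t F G

def HasColimitsOfShape (K C : SSet.{0}) : Prop := HasWeakColimitsOfOrder ⊤ K C

/-- the cone point of `K ⋆ Δ⁰`, as a 0-simplex -/
def conePt (K : SSet.{0}) : (rcone K).obj (op (SimplexCategory.mk 0)) where
  c := OrderHom.const _ 1
  left := vertSubElim (fun _ h => Fin.zero_ne_one h.symm) K
  right := { app := fun _ => TypeCat.ofHom fun _ => OrderHom.const _ 0, naturality := fun _ _ _ => rfl }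

/-- the cone object (vertex) of a cocone -/
def coneVertex {K C : SSet.{0}} (G : rcone K ⟶ C) : Vert C := G.app _ (conePt K)

/-- image of a cocone under a functor -/
def coconeMap {K C D : SSet.{0}} {F : K ⟶ C} (f : C ⟶ D) (G : Cocone F) : Cocone (F ≫ f) :=
  ⟨G.1 ≫ f, by exact congrArg (fun u => u ≫ f) G.2⟩

-- ### the corner (walking span) and squares

def cornerCond {m : ℕ} (u : Fin (m + 1) →o Fin 3) : Prop :=
  (∀ i, u i ≠ 2) ∨ (∀ i, u i ≠ 1)

/-- The corner `⌐ = Δ¹ ∪_{Δ⁰} Δ¹` (the walking span): the subcomplex of `Δ²`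
spanned by the edges `{0,1}` and `{0,2}`. -/
def corner : SSet.{0} where
  obj m := {u : Fin (m.unop.len + 1) →o Fin 3 // cornerCond u}
  map f := TypeCat.ofHom fun u => ⟨u.1.comp f.unop.toOrderHom, u.2.imp (fun h _ => h _) (fun h _ => h _)⟩
  map_id _ := rfl
  map_comp _ _ := rfl

/-- The square `Δ¹ × Δ¹`. -/
def square : SSet.{0} := sprod (stdS 1) (stdS 1)

def fst3 : Fin 3 → Fin 2 := ![0, 0, 1]
def snd3 : Fin 3 → Fin 2 := ![0, 1, 0]

lemma fst3_mono : ∀ v w : Fin 3, v ≤ w → fst3 v ≤ fst3 w := by decide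
lemma snd3_mono : ∀ v w : Fin 3, v ≤ w →
    ((v ≠ 2 ∧ w ≠ 2) ∨ (v ≠ 1 ∧ w ≠ 1)) → snd3 v ≤ snd3 w := by decide

section theta

variable {m : SimplexCategoryᵒᵖ} (x : JoinCell corner (stdS 0) m)

def vSimp {i : Fin (m.unop.len + 1)} (hi : x.c i = 0) :
    (vertSub fun i' => x.c i' = 0).obj (op (SimplexCategory.mk 0)) :=
  ⟨OrderHom.const _ i, fun _ => hi⟩

def eSimp {i j : Fin (m.unop.len + 1)} (hij : i ≤ j) (hi : x.c i = 0) (hj : x.c j = 0) :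
    (vertSub fun i' => x.c i' = 0).obj (op (SimplexCategory.mk 1)) :=
  ⟨⟨![i, j], by
      rw [Fin.monotone_iff_le_succ]
      intro k
      fin_cases k
      simpa using hij⟩,
    fun k => by fin_cases k <;> [exact hi; exact hj]⟩

/-- The `i`-th vertex of the left part of a cell of `⌐ ⋆ Δ⁰`, as a vertex of `Δ²`. -/
def cvert {i : Fin (m.unop.len + 1)} (hi : x.c i = 0) : Fin 3 :=
  (x.left.app (op (SimplexCategory.mk 0)) (vSimp x hi)).1 0

def cedge {i j : Fin (m.unop.len + 1)} (hij : i ≤ j) (hi : x.c i = 0) (hj : x.c j = 0) :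
    corner.obj (op (SimplexCategory.mk 1)) :=
  x.left.app (op (SimplexCategory.mk 1)) (eSimp x hij hi hj)

lemma cedge_src {i j : Fin (m.unop.len + 1)} (hij : i ≤ j) (hi : x.c i = 0) (hj : x.c j = 0) :
    (cedge x hij hi hj).1 0 = cvert x hi := by
  have nat := NatTrans.naturality_apply x.left
    (Quiver.Hom.op (SimplexCategory.δ (1 : Fin 2))) (eSimp x hij hi hj)
  have e1 : (corner.map (Quiver.Hom.op (SimplexCategory.δ (1 : Fin 2)))
      (cedge x hij hi hj)).1 0 = (cedge x hij hi hj).1 0 :=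
    congrArg (cedge x hij hi hj).1
      (by decide : (SimplexCategory.δ (1 : Fin 2)).toOrderHom (0 : Fin 1) = 0)
  have key : (vertSub fun i' => x.c i' = 0).map (Quiver.Hom.op (SimplexCategory.δ (1 : Fin 2)))
      (eSimp x hij hi hj) = vSimp x hi := by
    refine Subtype.ext (OrderHom.ext _ _ (funext fun a => ?_))
    have inst : Subsingleton (Fin ((unop (op (SimplexCategory.mk 0))).len + 1)) :=
      inferInstanceAs (Subsingleton (Fin 1))
    have ha : a = (0 : Fin 1) := @Subsingleton.elim _ inst a 0
    rw [ha]
    show (![i, j] : Fin 2 → Fin (m.unop.len+1)) ((SimplexCategory.δ (1 : Fin 2)).toOrderHom 0) = i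
    rw [(by decide : (SimplexCategory.δ (1 : Fin 2)).toOrderHom (0 : Fin 1) = 0)]
    rfl
  rw [← e1]
  show (corner.map (Quiver.Hom.op (SimplexCategory.δ (1 : Fin 2)))
      (x.left.app _ (eSimp x hij hi hj))).1 0 = cvert x hi
  rw [← nat, key]
  rfl

lemma cedge_tgt {i j : Fin (m.unop.len + 1)} (hij : i ≤ j) (hi : x.c i = 0) (hj : x.c j = 0) :
    (cedge x hij hi hj).1 1 = cvert x hj := by
  have nat := NatTrans.naturality_apply x.left
    (Quiver.Hom.op (SimplexCategory.δ (0 : Fin 2))) (eSimp x hij hi hj)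
  have e1 : (corner.map (Quiver.Hom.op (SimplexCategory.δ (0 : Fin 2)))
      (cedge x hij hi hj)).1 0 = (cedge x hij hi hj).1 1 :=
    congrArg (cedge x hij hi hj).1
      (by decide : (SimplexCategory.δ (0 : Fin 2)).toOrderHom (0 : Fin 1) = 1)
  have key : (vertSub fun i' => x.c i' = 0).map (Quiver.Hom.op (SimplexCategory.δ (0 : Fin 2)))
      (eSimp x hij hi hj) = vSimp x hj := by
    refine Subtype.ext (OrderHom.ext _ _ (funext fun a => ?_))
    have inst : Subsingleton (Fin ((unop (op (SimplexCategory.mk 0))).len + 1)) :=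
      inferInstanceAs (Subsingleton (Fin 1))
    have ha : a = (0 : Fin 1) := @Subsingleton.elim _ inst a 0
    rw [ha]
    show (![i, j] : Fin 2 → Fin (m.unop.len+1)) ((SimplexCategory.δ (0 : Fin 2)).toOrderHom 0) = j
    rw [(by decide : (SimplexCategory.δ (0 : Fin 2)).toOrderHom (0 : Fin 1) = 1)]
    rfl
  rw [← e1]
  show (corner.map (Quiver.Hom.op (SimplexCategory.δ (0 : Fin 2)))
      (x.left.app _ (eSimp x hij hi hj))).1 0 = cvert x hj
  rw [← nat, key]
  rfl

lemma cvert_le {i j : Fin (m.unop.len + 1)} (hij : i ≤ j) (hi : x.c i = 0) (hj : x.c j = 0) :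
    cvert x hi ≤ cvert x hj ∧
      ((cvert x hi ≠ 2 ∧ cvert x hj ≠ 2) ∨ (cvert x hi ≠ 1 ∧ cvert x hj ≠ 1)) := by
  have h1 := cedge_src x hij hi hj
  have h2 := cedge_tgt x hij hi hj
  refine ⟨?_, ?_⟩
  · rw [← h1, ← h2]
    exact (cedge x hij hi hj).1.monotone (by decide)
  · rcases (cedge x hij hi hj).2 with h | h
    · exact Or.inl ⟨h1 ▸ h 0, h2 ▸ h 1⟩
    · exact Or.inr ⟨h1 ▸ h 0, h2 ▸ h 1⟩

lemma c_one_of_le {i j : Fin (m.unop.len + 1)} (hij : i ≤ j) (hi : x.c i = 1) : x.c j = 1 :=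
  le_antisymm (Fin.le_last _) (hi ▸ x.c.monotone hij)

/-- first coordinate of the comparison map `⌐ ⋆ Δ⁰ ⟶ Δ¹ × Δ¹` -/
def thetaA : Fin (m.unop.len + 1) →o Fin 2 where
  toFun i := if h : x.c i = 0 then fst3 (cvert x h) else 1
  monotone' := by
    intro i j hij
    dsimp only
    by_cases hi : x.c i = 0
    · by_cases hj : x.c j = 0
      · rw [dif_pos hi, dif_pos hj]
        exact fst3_mono _ _ (cvert_le x hij hi hj).1
      · rw [dif_pos hi, dif_neg hj]
        exact Fin.le_last _
    · rw [dif_neg hi]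
      have h1 : x.c i = 1 := by omega
      rw [dif_neg (show ¬ x.c j = 0 by rw [c_one_of_le x hij h1]; decide)]

/-- second coordinate of the comparison map `⌐ ⋆ Δ⁰ ⟶ Δ¹ × Δ¹` -/
def thetaB : Fin (m.unop.len + 1) →o Fin 2 where
  toFun i := if h : x.c i = 0 then snd3 (cvert x h) else 1
  monotone' := by
    intro i j hij
    dsimp only
    by_cases hi : x.c i = 0
    · by_cases hj : x.c j = 0
      · rw [dif_pos hi, dif_pos hj]
        exact snd3_mono _ _ (cvert_le x hij hi hj).1 (cvert_le x hij hi hj).2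
      · rw [dif_pos hi, dif_neg hj]
        exact Fin.le_last _
    · rw [dif_neg hi]
      have h1 : x.c i = 1 := by omega
      rw [dif_neg (show ¬ x.c j = 0 by rw [c_one_of_le x hij h1]; decide)]

end theta

/-- The canonical comparison map `⌐ ⋆ Δ⁰ ⟶ Δ¹ × Δ¹` (an isomorphism of simplicial sets). -/
def cornerConeToSquare : rcone corner ⟶ square where
  app m := TypeCat.ofHom fun x => (thetaA x, thetaB x)
  naturality m m' f := by
    refine ConcreteCategory.hom_ext _ _ fun x => ?_
    refine Prod.ext (OrderHom.ext _ _ (funext fun a => ?_)) (OrderHom.ext _ _ (funext fun a => ?_)) <;> rfl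

/-- A square in `C` is a weak pushout of order `t` if the corresponding cocone over its
restriction to the corner is a weak colimit of order `t`. -/
def IsWeakPushoutOfOrder (t : ℕ∞) {C : SSet.{0}} (sq : square ⟶ C) : Prop :=
  IsWeakColimOfOrder t (joinInclLeft ≫ cornerConeToSquare ≫ sq)
    ⟨cornerConeToSquare ≫ sq, rfl⟩

/-- A square in `C` is a pushout if the corresponding cocone is a colimit. -/
def IsPushoutSquare {C : SSet.{0}} (sq : square ⟶ C) : Prop :=
  IsWeakPushoutOfOrder ⊤ sq

-- ### function complexes and the comparison functor Φ

/-- The function complex `Fun(K, C)`: `m`-simplices are maps `Δ^m × K ⟶ C`. -/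
def sFun (K C : SSet.{0}) : SSet.{0} where
  obj m := sprod (stdS m.unop.len) K ⟶ C
  map {m m'} f := TypeCat.ofHom fun u => sprodMap (stdSMap f.unop) (𝟙 K) ≫ u
  map_id _ := rfl
  map_comp _ _ := rfl

def toStd0 (K : SSet.{0}) : K ⟶ stdS 0 where
  app m := TypeCat.ofHom fun _ => OrderHom.const _ 0
  naturality _ _ _ := rfl

/-- the vertex of `Fun(K, C)` determined by a map `K ⟶ C` -/
def vertexOfMap {K C : SSet.{0}} (F : K ⟶ C) : Vert (sFun K C) := sprodSnd ≫ F

/-- the map `K ⟶ C` determined by a vertex of `Fun(K, C)` -/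
def vertexToMap {K C : SSet.{0}} (F : Vert (sFun K C)) : K ⟶ C :=
  sprodLift (toStd0 K) (𝟙 K) ≫ F

/-- precomposition functor on function complexes -/
def sFunMapLeft {K' K C : SSet.{0}} (g : K' ⟶ K) : sFun K C ⟶ sFun K' C where
  app m := TypeCat.ofHom fun u => sprodMap (𝟙 _) g ≫ u
  naturality _ _ _ := rfl

/-- postcomposition functor on function complexes -/
def sFunMapRight (K : SSet.{0}) {C C' : SSet.{0}} (f : C ⟶ C') : sFun K C ⟶ sFun K C' where
  app m := TypeCat.ofHom fun u => u ≫ f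
  naturality _ _ _ := rfl

lemma simplexMap_natural {A : SSet.{0}} {m m' : SimplexCategoryᵒᵖ} (f : m ⟶ m') (a : A.obj m) :
    simplexMap (A.map f a) = stdSMap f.unop ≫ simplexMap a :=
  NatTrans.ext (funext fun q => ConcreteCategory.hom_ext _ _ fun u =>
    (FunctorToTypes.map_comp_apply A f
      (Quiver.Hom.op (SimplexCategory.Hom.mk u : q.unop ⟶ m'.unop)) a).symm)

/-- uncurrying a map into a function complex -/
def uncurry {A K C : SSet.{0}} (u : A ⟶ sFun K C) : sprod A K ⟶ C where
  app q := TypeCat.ofHom fun ak => (u.app q ak.1).app q (OrderHom.id, ak.2)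
  naturality q q' f := by
    refine ConcreteCategory.hom_ext _ _ fun ak => ?_
    obtain ⟨a, k⟩ := ak
    have h1 : u.app q' (A.map f a) = (sFun K C).map f (u.app q a) :=
      types_congr_hom (u.naturality f) a
    have h2 := types_congr_hom ((u.app q a).naturality f)
      (show (sprod (stdS q.unop.len) K).obj q from ((OrderHom.id : Fin (q.unop.len+1) →o _), k))
    show (u.app q' (A.map f a)).app q' (OrderHom.id, K.map f k) = _
    rw [h1]
    exact h2

/-- skeleta of a product project to products of skeleta -/
def skProj (d : ℕ) (A K : SSet.{0}) : sk d (sprod A K) ⟶ sprod (sk d A) K where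
  app m := TypeCat.ofHom fun x => (⟨x.1.1, by
    obtain ⟨kk, hk, φ, y, e⟩ := x.2
    exact ⟨kk, hk, φ, y.1, congrArg Prod.fst e⟩⟩, x.1.2)
  naturality _ _ _ := by
    refine ConcreteCategory.hom_ext _ _ fun x => ?_
    exact Prod.ext (Subtype.ext rfl) rfl

def shuffle (A K J' : SSet.{0}) : sprod (sprod A K) J' ⟶ sprod (sprod A J') K where
  app m := TypeCat.ofHom fun x => ((x.1.1, x.2), x.1.2)
  naturality _ _ _ := rfl

section Phi

variable (n : ℕ) {K C : SSet.{0}}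

/-- the cell of `h_n C` on `Δ^q` obtained from a cell of `h_n Fun(K,C)` on `Δ^m`
and a `q`-simplex of `Δ^m × K` -/
def phiCell {m : SimplexCategoryᵒᵖ} (u : NSimp n (sFun K C) m) {q : SimplexCategoryᵒᵖ}
    (σk : (sprod (stdS m.unop.len) K).obj q) : NSimp n C q := by
  refine ⟨skMap n (simplexMap σk) ≫ skProj n _ K ≫ uncurry u.1, ?_⟩
  obtain ⟨v, hv⟩ := u.2
  exact ⟨skMap (n+1) (simplexMap σk) ≫ skProj (n+1) _ K ≫ uncurry v, by rw [← hv]; rfl⟩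

lemma phiCell_rel {m : SimplexCategoryᵒᵖ} {u u' : NSimp n (sFun K C) m}
    (h : NRel n (sFun K C) u u') {q : SimplexCategoryᵒᵖ}
    (σk : (sprod (stdS m.unop.len) K).obj q) :
    NRel n C (phiCell n u σk) (phiCell n u' σk) := by
  obtain ⟨H, h0, h1, hrel⟩ := h
  refine ⟨sprodMap (skMap n (simplexMap σk) ≫ skProj n _ K) (𝟙 Jint) ≫ shuffle _ _ _ ≫
      uncurry H, ?_, ?_, ?_⟩
  · show _ = (phiCell n u σk).1
    show _ = skMap n (simplexMap σk) ≫ skProj n _ K ≫ uncurry u.1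
    rw [← h0]
    rfl
  · show _ = skMap n (simplexMap σk) ≫ skProj n _ K ≫ uncurry u'.1
    rw [← h1]
    rfl
  · show _ = _
    have key : sprodMap (skSkIncl (Nat.sub_le n 1) (stdS q.unop.len)) (𝟙 Jint) ≫
        (sprodMap (skMap n (simplexMap σk) ≫ skProj n _ K) (𝟙 Jint) ≫ shuffle _ _ _ ≫
          uncurry H)
        = sprodMap (skMap (n-1) (simplexMap σk) ≫ skProj (n-1) _ K) (𝟙 Jint) ≫ shuffle _ _ _ ≫
          sprodMap (sprodMap (skSkIncl (Nat.sub_le n 1) (stdS m.unop.len)) (𝟙 Jint)) (𝟙 K) ≫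
          uncurry H := rfl
    rw [key]
    have key2 : sprodMap (sprodMap (skSkIncl (Nat.sub_le n 1) (stdS m.unop.len)) (𝟙 Jint)) (𝟙 K) ≫
        uncurry H = uncurry (sprodMap (skSkIncl (Nat.sub_le n 1) (stdS m.unop.len)) (𝟙 Jint) ≫ H) :=
      rfl
    rw [key2, hrel]
    rfl

/-- The canonical comparison functor `Φ : h_n Fun(K, C) ⟶ Fun(K, h_n C)`. -/
def PhiFun (K C : SSet.{0}) : hq n (sFun K C) ⟶ sFun K (hq n C) where
  app m := TypeCat.ofHom <| Quot.lift
    (fun u =>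
      ({ app := fun q => TypeCat.ofHom fun σk => Quot.mk _ (phiCell n u σk)
         naturality := fun q q' g => by
          refine ConcreteCategory.hom_ext _ _ fun σk => ?_
          refine (congrArg (Quot.mk _) (Subtype.ext ?_) :
            Quot.mk _ (phiCell n u ((sprod (stdS m.unop.len) K).map g σk)) = _)
          show skMap n (simplexMap ((sprod (stdS m.unop.len) K).map g σk)) ≫
              skProj n _ K ≫ uncurry u.1 = _
          rw [simplexMap_natural]
          rfl } : sprod (stdS m.unop.len) K ⟶ hq n C))
    (fun u u' h => NatTrans.ext (funext fun q => ConcreteCategory.hom_ext _ _ fun σk =>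
      Quot.sound (phiCell_rel n h σk)))
  naturality m m' f := by
    refine ConcreteCategory.hom_ext _ _ fun x => ?_
    induction x using Quot.ind with
    | _ u =>
      exact NatTrans.ext (funext fun q => ConcreteCategory.hom_ext _ _ fun σk =>
        congrArg (Quot.mk _) (Subtype.ext rfl))

end Phi

-- ### equivalences, fibrations, n-categories

/-- the generic edge of the interval `J` -/
def jEdge : EdgeS Jint :=
  CategoryTheory.ComposableArrows.mk₁ (show (Walking.W0 : Walking) ⟶ Walking.W1 from PUnit.unit)

/-- An edge of a simplicial set is an equivalence if it extends to the interval `J`. -/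
def IsEquivEdge (A : SSet.{0}) (e : EdgeS A) : Prop :=
  ∃ u : Jint ⟶ A, u.app (op (SimplexCategory.mk 1)) jEdge = e

/-- Two vertices are equivalent if there is an equivalence edge between them. -/
def EquivVerts (A : SSet.{0}) (x y : Vert A) : Prop :=
  ∃ e : EdgeS A, IsEquivEdge A e ∧ edgeSrc e = x ∧ edgeTgt e = y

/-- `f` is an equivalence (of ∞-categories): it admits an inverse up to `J`-homotopy. -/
def IsEquivalenceQ {A B : SSet.{0}} (f : A ⟶ B) : Prop :=
  ∃ g : B ⟶ A, JHomotopic (f ≫ g) (𝟙 A) ∧ JHomotopic (g ≫ f) (𝟙 B)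

/-- essential surjectivity -/
def EssSurjQ {A B : SSet.{0}} (f : A ⟶ B) : Prop :=
  ∀ y : Vert B, ∃ x : Vert A, EquivVerts B (f.app _ x) y

/-- `(c-1)`-connectivity of a map (`TopConnSub1 c f` means `f` is `(c-1)`-connected). -/
def TopConnSub1 (c : ℕ∞) {X Y : TopCat} (f : X ⟶ Y) : Prop :=
  ∀ x : X,
    (∀ k : ℕ, (k + 1 : ℕ∞) < c → Function.Bijective (πMap k f x)) ∧
    (∀ k : ℕ, (k + 1 : ℕ∞) = c → Function.Surjective (πMap k f x))

/-- `f` is `c`-full: it restricts to `(c-1)`-connected maps on mapping spaces. -/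
def NFullQ (c : ℕ∞) {A B : SSet.{0}} (f : A ⟶ B) : Prop :=
  ∀ x y : Vert A, TopConnSub1 c (geom.map (mapSpMap f rfl rfl : MapSp A x y ⟶ _))

/-- inner fibrations: right lifting property against inner horns -/
def InnerFibration {X Y : SSet.{0}} (p : X ⟶ Y) : Prop :=
  ∀ (n : ℕ) (i : Fin (n + 1)), 0 < i → i < Fin.last n →
    ∀ (u : (SSet.horn n i : SSet) ⟶ X) (v : SSet.stdSimplex.obj (SimplexCategory.mk n) ⟶ Y),
      u ≫ p = (SSet.horn n i).ι ≫ v →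
      ∃ w, (SSet.horn n i).ι ≫ w = u ∧ w ≫ p = v

/-- equivalences lift along `p` (half of the isofibration condition) -/
def LiftsEquivs {X Y : SSet.{0}} (p : X ⟶ Y) : Prop :=
  ∀ (x : Vert X) (e : EdgeS Y), IsEquivEdge Y e → edgeSrc e = p.app _ x →
    ∃ ebar : EdgeS X, IsEquivEdge X ebar ∧ edgeSrc ebar = x ∧ p.app _ ebar = e

/-- categorical fibration (between ∞-categories): inner fibration + isofibration -/
def IsCategoricalFibration {X Y : SSet.{0}} (p : X ⟶ Y) : Prop :=
  InnerFibration p ∧ LiftsEquivs p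

/-- `C` is an `n`-category: simplices in dimension `> n` are determined by their boundary,
and homotopic (rel boundary) `n`-simplices are equal (Lurie, HTT 2.3.4.1). -/
def IsNCategory (n : ℕ) (C : SSet.{0}) : Prop :=
  (∀ f g : SSet.stdSimplex.obj (SimplexCategory.mk n) ⟶ C,
      HomotopicRelJ (SSet.boundary n).ι f g → f = g) ∧
  (∀ m : ℕ, n < m → ∀ f g : SSet.stdSimplex.obj (SimplexCategory.mk m) ⟶ C,
      (SSet.boundary m).ι ≫ f = (SSet.boundary m).ι ≫ g → f = g)

/-- `K` has dimension `≤ d`. -/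
def DimLE (K : SSet.{0}) (d : ℕ) : Prop :=
  ∀ (m : SimplexCategoryᵒᵖ) (x : K.obj m), inSk d K x

/-- A Kan complex (∞-groupoid): all horns fill. -/
def IsKan (A : SSet.{0}) : Prop :=
  ∀ (n : ℕ) (i : Fin (n + 1)) (u : (SSet.horn n i : SSet) ⟶ A),
    ∃ w : SSet.stdSimplex.obj (SimplexCategory.mk n) ⟶ A, (SSet.horn n i).ι ≫ w = u

/-- A simplicial set is finite dimensional and levelwise finite. -/
def IsFiniteSSet (K : SSet.{0}) : Prop :=
  (∃ d, DimLE K d) ∧ ∀ m, Finite (K.obj m)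

-- ### full subcomplexes, loop spaces, miscellany

/-- the `i`-th vertex of a simplex -/
def vertexAt {A : SSet.{0}} {m : SimplexCategoryᵒᵖ} (x : A.obj m) (i : Fin (m.unop.len + 1)) :
    Vert A :=
  A.map (Quiver.Hom.op (SimplexCategory.Hom.mk (OrderHom.const _ i) :
    SimplexCategory.mk 0 ⟶ m.unop)) x

lemma vertexAt_map {A : SSet.{0}} {m m' : SimplexCategoryᵒᵖ} (f : m ⟶ m') (x : A.obj m)
    (i : Fin (m'.unop.len + 1)) :
    vertexAt (A.map f x) i = vertexAt x (f.unop.toOrderHom i) :=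
  (FunctorToTypes.map_comp_apply A f (Quiver.Hom.op (SimplexCategory.Hom.mk (OrderHom.const _ i) :
    SimplexCategory.mk 0 ⟶ m'.unop)) x).symm

/-- The full simplicial subset spanned by the vertices satisfying `P`. -/
def fullSubSSet (A : SSet.{0}) (P : Vert A → Prop) : SSet.{0} where
  obj m := {x : A.obj m // ∀ i, P (vertexAt x i)}
  map f := TypeCat.ofHom fun x => ⟨A.map f x.1, fun i => by rw [vertexAt_map]; exact x.2 _⟩
  map_id m := ConcreteCategory.hom_ext _ _ fun x => Subtype.ext (types_congr_hom (A.map_id m) x.1)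
  map_comp f g := ConcreteCategory.hom_ext _ _ fun x => Subtype.ext (types_congr_hom (A.map_comp f g) x.1)

/-- `h_t` for `t ∈ ℕ ∪ {∞}` (with `h_∞ C = C`). -/
def hqE : ℕ∞ → SSet.{0} → SSet.{0} := fun t C => match t, C with
  | ⊤, C => by exact C
  | (t : ℕ), C => hq t C

def toHqE : (t : ℕ∞) → (C : SSet.{0}) → (C ⟶ hqE t C) := fun t C => match t, C with
  | ⊤, C => by exact 𝟙 C
  | (t : ℕ), C => toHq t C

/-- section of the `n`-skeleton inclusion of `Δ^p` for `p ≤ n` -/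
def skSec {p n : ℕ} (h : p ≤ n) : stdS p ⟶ sk n (stdS p) where
  app q := TypeCat.ofHom fun x => ⟨x, ⟨p, h, SimplexCategory.Hom.mk x, stdTaut p, rfl⟩⟩
  naturality _ _ _ := ConcreteCategory.hom_ext _ _ fun x => Subtype.ext rfl

-- ### loop spaces

def ΩSp (X : TopCat) (x : X) : TopCat := TopCat.of (Path x x)

noncomputable def ΩMap {X Y : TopCat} (f : X ⟶ Y) (x : X) : ΩSp X x ⟶ ΩSp Y (f x) :=
  TopCat.ofHom (⟨fun γ => γ.map f.hom.continuous, by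
    rw [← Path.continuous_uncurry_iff]
    exact f.hom.continuous.comp continuous_eval⟩ : C(Path x x, Path (f x) (f x)))

-- ### constant diagrams, discrete shapes, adjunctions, composition of edges

/-- the constant-diagram functor `C ⟶ Fun(K, C)` -/
def constDiag (K C : SSet.{0}) : C ⟶ sFun K C where
  app m := TypeCat.ofHom fun x => sprodFst ≫ simplexMap x
  naturality m m' f := by
    refine ConcreteCategory.hom_ext _ _ fun x => ?_
    show sprodFst ≫ simplexMap (C.map f x) = _
    rw [simplexMap_natural]
    rfl

/-- the discrete simplicial set on `Fin s` -/
def discS (s : ℕ) : SSet.{0} where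
  obj _ := Fin s
  map _ := TypeCat.ofHom fun x => x
  map_id _ := rfl
  map_comp _ _ := rfl

/-- `e02` is a composite of `e01` and `e12` (there is a 2-simplex witnessing it) -/
def EdgeComp (A : SSet.{0}) (e01 e12 e02 : EdgeS A) : Prop :=
  ∃ σ : A.obj (op (SimplexCategory.mk 2)),
    A.map (SimplexCategory.δ 2).op σ = e01 ∧
    A.map (SimplexCategory.δ 0).op σ = e12 ∧
    A.map (SimplexCategory.δ 1).op σ = e02

/-- `L` is left adjoint to `R`: there are unit and counit natural transformations
satisfying the triangle identities up to homotopy. -/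
def AreAdjoint {A B : SSet.{0}} (L : A ⟶ B) (R : B ⟶ A) : Prop :=
  ∃ (η : EdgeS (sFun A A)) (ε : EdgeS (sFun B B)),
    edgeSrc η = vertexOfMap (𝟙 A) ∧ edgeTgt η = vertexOfMap (L ≫ R) ∧
    edgeSrc ε = vertexOfMap (R ≫ L) ∧ edgeTgt ε = vertexOfMap (𝟙 B) ∧
    EdgeComp (sFun A B) (η ≫ L) (sprodMap (𝟙 (stdS 1)) L ≫ ε)
      (degEdge (vertexOfMap L)) ∧
    EdgeComp (sFun B A) (sprodMap (𝟙 (stdS 1)) R ≫ η) (ε ≫ R)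
      (degEdge (vertexOfMap R))

/-- `g` admits a left adjoint. -/
def HasLeftAdjointQ {A B : SSet.{0}} (g : B ⟶ A) : Prop := ∃ f : A ⟶ B, AreAdjoint f g

/-- `g` admits a right adjoint. -/
def HasRightAdjointQ {A B : SSet.{0}} (g : B ⟶ A) : Prop := ∃ f : A ⟶ B, AreAdjoint g f

/-- composition of simplicial function complexes -/
def compSS (A B E : SSet.{0}) : sprod (sFun B E) (sFun A B) ⟶ sFun A E where
  app m := TypeCat.ofHom fun x => sprodLift sprodFst x.2 ≫ x.1
  naturality _ _ _ := rfl

/-!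
Pairing representatives identifies `hₙ(C × D)` with `hₙC × hₙD`: a pair of homotopies
relative to the `(n-1)`-skeleton is a homotopy of the pair, so pairing respects the defining
relation, and it is inverse to the two projections on the nose.  The functor `hₙ^{C,D}` sends
`F : Δ^m × C ⟶ D` to `hₙF` precomposed with `Δ^m × hₙC ⟶ hₙ(Δ^m) × hₙC ≅ hₙ(Δ^m × C)`.
Since `γₙ` of a product is the pairing of the `γₙ`'s, restricting along `γₙ` gives `γₙ ∘ F`
by naturality of `γₙ`; naturality, units and composition hold already on representatives.
-/

namespace HomotopicRelJ

variable {L K C D : SSet.{0}} {i : L ⟶ K}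

lemma refl (f : K ⟶ C) : HomotopicRelJ i f f :=
  ⟨sprodFst ≫ f, rfl, rfl, rfl⟩

lemma sprodLift {f f' : K ⟶ C} {g g' : K ⟶ D} (hf : HomotopicRelJ i f f')
    (hg : HomotopicRelJ i g g') :
    HomotopicRelJ i (HighCat.sprodLift f g) (HighCat.sprodLift f' g') := by
  obtain ⟨H, hH0, hH1, hHrel⟩ := hf
  obtain ⟨H', hH'0, hH'1, hH'rel⟩ := hg
  refine ⟨HighCat.sprodLift H H', ?_, ?_, ?_⟩
  · rw [← hH0, ← hH'0]; rfl
  · rw [← hH1, ← hH'1]; rfl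
  · change HighCat.sprodLift (sprodMap i (𝟙 Jint) ≫ H) (sprodMap i (𝟙 Jint) ≫ H') = _
    rw [hHrel, hH'rel]; rfl

end HomotopicRelJ

section Pair

variable {n : ℕ} {C D : SSet.{0}} {m : SimplexCategoryᵒᵖ}

def NSimp.pair (u : NSimp n C m) (v : NSimp n D m) : NSimp n (sprod C D) m :=
  ⟨sprodLift u.1 v.1, by
    obtain ⟨u', hu⟩ := u.2
    obtain ⟨v', hv⟩ := v.2
    exact ⟨sprodLift u' v', by rw [← hu, ← hv]; rfl⟩⟩

lemma NRel.pair {u u' : NSimp n C m} {v v' : NSimp n D m} (hu : NRel n C u u')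
    (hv : NRel n D v v') : NRel n (sprod C D) (u.pair v) (u'.pair v') :=
  HomotopicRelJ.sprodLift hu hv

end Pair

section HqProd

variable (n : ℕ) (C D : SSet.{0})

def hqProdInv : sprod (hq n C) (hq n D) ⟶ hq n (sprod C D) where
  app m := TypeCat.ofHom fun x =>
    Quot.map₂ NSimp.pair (fun _ _ _ => (NRel.pair (HomotopicRelJ.refl _) ·))
      (fun _ _ _ h => NRel.pair h (HomotopicRelJ.refl _)) x.1 x.2
  naturality m m' f := by
    refine ConcreteCategory.hom_ext _ _ fun ⟨x, y⟩ => ?_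
    induction x using Quot.ind
    induction y using Quot.ind
    rfl

def hqProdIso : hq n (sprod C D) ≅ sprod (hq n C) (hq n D) where
  hom := sprodLift (hqMap n sprodFst) (hqMap n sprodSnd)
  inv := hqProdInv n C D
  hom_inv_id := NatTrans.ext (funext fun m => ConcreteCategory.hom_ext _ _ fun x => by
    induction x using Quot.ind
    rfl)
  inv_hom_id := NatTrans.ext (funext fun m => ConcreteCategory.hom_ext _ _ fun ⟨x, y⟩ => by
    induction x using Quot.ind
    induction y using Quot.ind
    rfl)

lemma toHq_sprod :
    toHq n (sprod C D) = sprodMap (toHq n C) (toHq n D) ≫ (hqProdIso n C D).inv :=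
  rfl

def hqFun : sFun C D ⟶ sFun (hq n C) (hq n D) where
  app m := TypeCat.ofHom fun F =>
    sprodMap (toHq n _) (𝟙 _) ≫ (hqProdIso n _ C).inv ≫ hqMap n F
  naturality m m' f := by
    refine ConcreteCategory.hom_ext _ _ fun F => ?_
    refine NatTrans.ext (funext fun q => ConcreteCategory.hom_ext _ _ fun ⟨σ, x⟩ => ?_)
    induction x using Quot.ind
    rfl

end HqProd

variable {n : ℕ}

lemma toHq_comp_hqMap {C D : SSet.{0}} (f : C ⟶ D) : toHq n C ≫ hqMap n f = f ≫ toHq n D := by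
  refine NatTrans.ext (funext fun m => ConcreteCategory.hom_ext _ _ fun x => ?_)
  refine congrArg (Quot.mk _) (Subtype.ext ?_)
  refine NatTrans.ext (funext fun q => ConcreteCategory.hom_ext _ _ fun u => ?_)
  exact types_congr_hom
    (f.naturality (Quiver.Hom.op (SimplexCategory.Hom.mk u.1 : q.unop ⟶ m.unop))) x

lemma hom_sFun_hq_ext {X C E : SSet.{0}} {f g : X ⟶ sFun (hq n C) E}
    (h : ∀ m (x : X.obj m) q (σ : (stdS m.unop.len).obj q) (u : NSimp n C q),
      (f.app m x).app q (σ, Quot.mk _ u) = (g.app m x).app q (σ, Quot.mk _ u)) :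
    f = g := by
  refine NatTrans.ext (funext fun m => ConcreteCategory.hom_ext _ _ fun x => ?_)
  refine NatTrans.ext (funext fun q => ConcreteCategory.hom_ext _ _ fun ⟨σ, y⟩ => ?_)
  induction y using Quot.ind
  exact h m x q σ _

lemma hqFun_comp_sFunMapLeft_toHq (C D : SSet.{0}) :
    hqFun n C D ≫ sFunMapLeft (toHq n C) = sFunMapRight C (toHq n D) := by
  refine NatTrans.ext (funext fun m => ConcreteCategory.hom_ext _ _
    fun (F : sprod (stdS m.unop.len) C ⟶ D) => ?_)
  change sprodMap (toHq n _) (toHq n C) ≫ (hqProdIso n _ C).inv ≫ hqMap n F = F ≫ toHq n D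
  rw [← Category.assoc, ← toHq_sprod, toHq_comp_hqMap]

lemma hqFun_comp_sFunMapLeft_hqMap {C' C : SSet.{0}} (D : SSet.{0}) (u : C' ⟶ C) :
    hqFun n C D ≫ sFunMapLeft (hqMap n u) = sFunMapLeft u ≫ hqFun n C' D :=
  hom_sFun_hq_ext fun _ _ _ _ _ => rfl

lemma hqFun_comp_sFunMapRight_hqMap (C : SSet.{0}) {D D' : SSet.{0}} (v : D ⟶ D') :
    hqFun n C D ≫ sFunMapRight _ (hqMap n v) = sFunMapRight _ v ≫ hqFun n C D' :=
  hom_sFun_hq_ext fun _ _ _ _ _ => rfl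

lemma hqFun_vertexOfMap_id (C : SSet.{0}) :
    (hqFun n C C).app (op (SimplexCategory.mk 0)) (vertexOfMap (𝟙 C)) =
      vertexOfMap (𝟙 (hq n C)) := by
  refine NatTrans.ext (funext fun q => ConcreteCategory.hom_ext _ _ fun ⟨σ, x⟩ => ?_)
  induction x using Quot.ind
  rfl

lemma sprodMap_hqFun_comp_compSS (C D E : SSet.{0}) :
    sprodMap (hqFun n D E) (hqFun n C D) ≫ compSS (hq n C) (hq n D) (hq n E) =
      compSS C D E ≫ hqFun n C E :=
  hom_sFun_hq_ext fun _ _ _ _ _ => rfl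

theorem hn_products_and_enrichment_general (n : ℕ) :
    (∀ C D : SSet.{0},
      IsIso (sprodLift (hqMap n (sprodFst : sprod C D ⟶ C))
        (hqMap n (sprodSnd : sprod C D ⟶ D)))) ∧
    ∃ H : ∀ C D : SSet.{0}, sFun C D ⟶ sFun (hq n C) (hq n D),
      -- each simplex is sent to the simplex induced by γₙ
      (∀ C D : SSet.{0}, H C D ≫ sFunMapLeft (toHq n C) = sFunMapRight C (toHq n D)) ∧
      -- naturality in C and in D
      (∀ (C' C D : SSet.{0}) (u : C' ⟶ C),
        H C D ≫ sFunMapLeft (hqMap n u) = sFunMapLeft u ≫ H C' D) ∧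
      (∀ (C D D' : SSet.{0}) (v : D ⟶ D'),
        H C D ≫ sFunMapRight _ (hqMap n v) = sFunMapRight _ v ≫ H C D') ∧
      -- hₙ is an enriched functor: units and composition are preserved
      (∀ C : SSet.{0},
        (H C C).app (op (SimplexCategory.mk 0)) (vertexOfMap (𝟙 C)) =
          vertexOfMap (𝟙 (hq n C))) ∧
      (∀ C D E : SSet.{0},
        sprodMap (H D E) (H C D) ≫ compSS (hq n C) (hq n D) (hq n E) =
          compSS C D E ≫ H C E) :=
  ⟨fun C D => (hqProdIso n C D).isIso_hom,
    hqFun n, hqFun_comp_sFunMapLeft_toHq, fun _ _ D u => hqFun_comp_sFunMapLeft_hqMap D u,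
    fun C _ _ v => hqFun_comp_sFunMapRight_hqMap C v, hqFun_vertexOfMap_id,
    sprodMap_hqFun_comp_compSS⟩

theorem hn_products_and_enrichment (n : ℕ) (hn : 1 ≤ n) :
    (∀ C D : SSet.{0},
      IsIso (sprodLift (hqMap n (sprodFst : sprod C D ⟶ C))
        (hqMap n (sprodSnd : sprod C D ⟶ D)))) ∧
    ∃ H : ∀ C D : SSet.{0}, sFun C D ⟶ sFun (hq n C) (hq n D),
      -- each simplex is sent to the simplex induced by γₙ
      (∀ C D : SSet.{0}, H C D ≫ sFunMapLeft (toHq n C) = sFunMapRight C (toHq n D)) ∧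
      -- naturality in C and in D
      (∀ (C' C D : SSet.{0}) (u : C' ⟶ C),
        H C D ≫ sFunMapLeft (hqMap n u) = sFunMapLeft u ≫ H C' D) ∧
      (∀ (C D D' : SSet.{0}) (v : D ⟶ D'),
        H C D ≫ sFunMapRight _ (hqMap n v) = sFunMapRight _ v ≫ H C D') ∧
      -- hₙ is an enriched functor: units and composition are preserved
      (∀ C : SSet.{0},
        (H C C).app (op (SimplexCategory.mk 0)) (vertexOfMap (𝟙 C)) =
          vertexOfMap (𝟙 (hq n C))) ∧
      (∀ C D E : SSet.{0},
        sprodMap (H D E) (H C D) ≫ compSS (hq n C) (hq n D) (hq n E) =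
          compSS C D E ≫ H C E) :=
  hn_products_and_enrichment_general n

end HighCat
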